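/- arXiv:2310.18054 — 5 statements merged into one kernel-verified Lean document; each statement's English description precedes it below -/
import Mathlib

section
/- Let a be a rational number with 1 + a*(2 + a*(9 + 4*a*(1 + a))) ≠ 0. Define δ = a*(1+a)*(-3 + a + 4a^3)/(1 + a*(2 + a*(9 + 4a*(1+a)))), γ = a*(-1 + a^2*(5 + 4a*(1+a))*(6 + a*(8 + 3a*(5 + 4a*(1+a)))))/(1 + a*(2 + a*(9 + 4a*(1+a))))^2, and b = (a^2 - a^3 - 69a^4 - 196a^5 + 314a^6 + 2226a^7 + 7622a^8 + 15308a^9 + 25285a^10 + 30279a^11 + 31599a^12 + 24864a^13 + 16624a^14 + 6496a^15 + 160a^16 - 3072a^17 - 2560a^18 - 1280a^19 - 256a^20)/(1 + a*(2 + a*(9 + 4a*(1+a))))^4. Then for f(x) = x^2 + a*x + b one has f(δ^2) = a^2 and f(a^2) = γ^2. -/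
theorem three_consecutive_squares_param_ax (a : ℚ)
    (hden : 1 + a*(2 + a*(9 + 4*a*(1 + a))) ≠ 0)
    (δ : ℚ) (hδ : δ = a*(1 + a)*(-3 + a + 4*a^3) / (1 + a*(2 + a*(9 + 4*a*(1 + a)))))
    (γ : ℚ) (hγ : γ = a*(-1 + a^2*(5 + 4*a*(1 + a))*(6 + a*(8 + 3*a*(5 + 4*a*(1 + a))))) /
      (1 + a*(2 + a*(9 + 4*a*(1 + a))))^2)
    (b : ℚ) (hb : b = (a^2 - a^3 - 69*a^4 - 196*a^5 + 314*a^6 + 2226*a^7 + 7622*a^8 +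
      15308*a^9 + 25285*a^10 + 30279*a^11 + 31599*a^12 + 24864*a^13 + 16624*a^14 +
      6496*a^15 + 160*a^16 - 3072*a^17 - 2560*a^18 - 1280*a^19 - 256*a^20) /
      (1 + a*(2 + a*(9 + 4*a*(1 + a))))^4)
    (f : ℚ → ℚ) (hf : ∀ x, f x = x^2 + a*x + b) :
    f (δ^2) = a^2 ∧ f (a^2) = γ^2 := by
  subst hδ hγ hb
  have h1 : 1 + a * (2 + a * (9 + a * (1 + a) * 4)) ≠ 0 := by convert hden using 3; ring
  have h2 : 1 + a * (2 + a * (9 + a * 4 * (1 + a))) ≠ 0 := by convert hden using 3; ring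
  constructor <;> rw [hf] <;> field_simp <;> ring
end

section
/- Let α be rational with α ≠ 1, α^2 - α - 4 ≠ 0, and α^4 - 2α^3 - 7α^2 + 8α + 16 ≠ 0. Set a = -(α - 1)*α^2*(α^2 - 9)/(4 + α - α^2)^2 and f(x) = x^2 + a*x - a. Then f(α) = ((α^2 - 5α)/(α^2 - α - 4))^2 and f(f(α)) = ((3α^5 - 13α^4 + 13α^3 - 15α^2 + 12α)/((α^4 - 2α^3 - 7α^2 + 8α + 16)*(α - 1)))^2. -/
theorem orbit_xsq_ax_minus_a (α : ℚ) (h1 : α ≠ 1)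
    (h2 : α^2 - α - 4 ≠ 0) (h3 : α^4 - 2*α^3 - 7*α^2 + 8*α + 16 ≠ 0)
    (a : ℚ) (ha : a = -((α - 1)*α^2*(α^2 - 9)) / (4 + α - α^2)^2)
    (f : ℚ → ℚ) (hf : ∀ x, f x = x^2 + a*x - a) :
    f α = ((α^2 - 5*α) / (α^2 - α - 4))^2 ∧
    f (f α) = ((3*α^5 - 13*α^4 + 13*α^3 - 15*α^2 + 12*α) /
      ((α^4 - 2*α^3 - 7*α^2 + 8*α + 16)*(α - 1)))^2 := by
  have h2' : (4 + α - α^2) ≠ 0 := by intro h; apply h2; linarith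
  have h1' : α - 1 ≠ 0 := sub_ne_zero.mpr h1
  constructor
  · rw [hf, ha]; field_simp [show α * (α - 1) - 4 ≠ 0 by convert h2 using 1; ring]; ring
  · rw [hf, hf, ha]; field_simp [show α * (α * (α * (α - 2) - 7) + 8) + 16 ≠ 0 by convert h3 using 1; ring]; ring
end

section
/- Let f(x) = x^2 + c with c rational. f has a rational point of exact period 2 if and only if c = -3/4 - σ^2 for some nonzero rational σ; in that case x = -1/2 + σ and x' = -1/2 - σ satisfy f(x) = x', f(x') = x, and x ≠ x'. -/
/-!
`f (f x) - x` factors as `(f x - x) * (x ^ 2 + x + c + 1)`, so the points of exact period two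
are the roots of the second factor that are not fixed. Completing the square with `σ = x + 1/2`
turns that factor into `c = -3/4 - σ ^ 2`, and `σ = 0` is exactly the case of a double root,
which is a fixed point.
-/

theorem sq_add_sq_add_sub_eq_mul {R : Type*} [CommRing R] (x c : R) :
    (x ^ 2 + c) ^ 2 + c - x = (x ^ 2 + c - x) * (x ^ 2 + x + c + 1) := by
  ring

section PeriodTwo

variable {K : Type*} [Field K] [CharZero K]

theorem sq_add_of_eq_neg_three_quarters_sub_sq {c σ : K} (hc : c = -3/4 - σ ^ 2) :
    (-1/2 + σ) ^ 2 + c = -1/2 - σ ∧ (-1/2 - σ) ^ 2 + c = -1/2 + σ := by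
  subst hc
  constructor <;> ring

theorem neg_half_add_ne_neg_half_sub {σ : K} (hσ : σ ≠ 0) : -1/2 + σ ≠ -1/2 - σ := by
  intro h
  exact hσ (by linear_combination h / 2)

theorem exists_sq_add_period_two_iff (c : K) :
    (∃ x : K, (x ^ 2 + c) ^ 2 + c = x ∧ x ^ 2 + c ≠ x) ↔ ∃ σ : K, σ ≠ 0 ∧ c = -3/4 - σ ^ 2 := by
  constructor
  · rintro ⟨x, hperiod, hnot_fixed⟩
    have hroot : x ^ 2 + x + c + 1 = 0 := by
      have := sq_add_sq_add_sub_eq_mul x c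
      rw [hperiod, sub_self, eq_comm, mul_eq_zero] at this
      exact this.resolve_left (sub_ne_zero.mpr hnot_fixed)
    refine ⟨x + 1/2, fun hσ => hnot_fixed ?_, by linear_combination hroot⟩
    have hx : x = -1/2 := by linear_combination hσ
    subst hx
    linear_combination hroot
  · rintro ⟨σ, hσ, hc⟩
    obtain ⟨h₁, h₂⟩ := sq_add_of_eq_neg_three_quarters_sub_sq hc
    refine ⟨-1/2 + σ, by rw [h₁, h₂], ?_⟩
    rw [h₁]
    exact (neg_half_add_ne_neg_half_sub hσ).symm

end PeriodTwo

theorem rational_period_two (c : ℚ) (f : ℚ → ℚ) (hf : ∀ x, f x = x^2 + c) :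
    ((∃ x : ℚ, f (f x) = x ∧ f x ≠ x) ↔ ∃ σ : ℚ, σ ≠ 0 ∧ c = -3/4 - σ^2) ∧
    (∀ σ : ℚ, σ ≠ 0 → c = -3/4 - σ^2 →
      f (-1/2 + σ) = -1/2 - σ ∧ f (-1/2 - σ) = -1/2 + σ ∧
      (-1/2 + σ : ℚ) ≠ -1/2 - σ) := by
  obtain rfl : f = fun x => x ^ 2 + c := funext hf
  refine ⟨exists_sq_add_period_two_iff c, fun σ hσ hc => ?_⟩
  obtain ⟨h₁, h₂⟩ := sq_add_of_eq_neg_three_quarters_sub_sq hc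
  exact ⟨h₁, h₂, neg_half_add_ne_neg_half_sub hσ⟩
end

section
/- Let τ be a rational number with τ ≠ 0 and τ ≠ -1, and set c = -(τ^6 + 2τ^5 + 4τ^4 + 8τ^3 + 9τ^2 + 4τ + 1)/(4τ^2(τ+1)^2). Define x1 = (τ^3 + 2τ^2 + τ + 1)/(2τ(τ+1)), x2 = (τ^3 - τ - 1)/(2τ(τ+1)), x3 = -(τ^3 + 2τ^2 + 3τ + 1)/(2τ(τ+1)). Then for f(x) = x^2 + c one has f(x1) = x2, f(x2) = x3, and f(x3) = x1. -/
/-!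
Over the common denominator `d = 2τ(τ+1)` write `xᵢ = pᵢ / d` and `c = -q / d²`, so that
`f (p / d) = (p² - q) / d²`. The three-cycle then amounts to the polynomial identities
`pᵢ² - q = pᵢ₊₁ * d` in `ℤ[τ]`.
-/

theorem div_sq_add_neg_div_sq_eq_div_iff {K : Type*} [Field K] {d : K} (hd : d ≠ 0)
    (p q r : K) : (p / d) ^ 2 + -q / d ^ 2 = r / d ↔ p ^ 2 - q = r * d := by
  rw [div_pow, neg_div, ← sub_eq_add_neg, ← sub_div, div_eq_div_iff (pow_ne_zero 2 hd) hd, sq d,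
    ← mul_assoc, mul_left_inj' hd]

theorem rational_three_cycle (τ : ℚ) (h0 : τ ≠ 0) (h1 : τ ≠ -1)
    (c : ℚ) (hc : c = -(τ^6 + 2*τ^5 + 4*τ^4 + 8*τ^3 + 9*τ^2 + 4*τ + 1) /
      (4*τ^2*(τ + 1)^2))
    (x1 x2 x3 : ℚ)
    (hx1 : x1 = (τ^3 + 2*τ^2 + τ + 1) / (2*τ*(τ + 1)))
    (hx2 : x2 = (τ^3 - τ - 1) / (2*τ*(τ + 1)))
    (hx3 : x3 = -(τ^3 + 2*τ^2 + 3*τ + 1) / (2*τ*(τ + 1)))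
    (f : ℚ → ℚ) (hf : ∀ x, f x = x^2 + c) :
    f x1 = x2 ∧ f x2 = x3 ∧ f x3 = x1 := by
  have hd : 2 * τ * (τ + 1) ≠ 0 :=
    mul_ne_zero (mul_ne_zero two_ne_zero h0) fun h ↦ h1 (eq_neg_of_add_eq_zero_left h)
  have hc' : c = -(τ^6 + 2*τ^5 + 4*τ^4 + 8*τ^3 + 9*τ^2 + 4*τ + 1) / (2 * τ * (τ + 1)) ^ 2 := by
    rw [hc]; ring
  simp only [hf, hc', hx1, hx2, hx3, div_sq_add_neg_div_sq_eq_div_iff hd]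
  refine ⟨?_, ?_, ?_⟩ <;> ring
end

section
/- Let m, n, r be rational numbers with m^2, n^2, r^2 pairwise distinct. There exists a monic quadratic polynomial f(x) = x^2 + a*x + b with rational coefficients satisfying f(m^2) = n^2, f(n^2) = r^2, f(r^2) = m^2 if and only if m^4*(1 - n^2 + r^2) + m^2*(-n^2 + n^4 - r^2*(1 + r^2)) + r^4 - n^4*(r^2 - 1) + n^2*r^2*(r^2 - 1) = 0. In that case a = (-m^6 + m^2*n^4 - n^6 + m^4*r^2 + n^2*r^4 - r^6)/((m^2 - n^2)*(m^2 - r^2)*(n^2 - r^2)) and b = (m^6*n^2 - m^4*n^4 + n^6*r^2 - m^4*r^4 - n^4*r^4 + m^2*r^6)/((-m^2 + n^2)*(n^2 - r^2)*(-m^2 + r^2)). -/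
/-!
The conditions `f x = y`, `f y = z`, `f z = x` on `f = X^2 + a X + b` are three linear equations
in `(a, b)`. For pairwise distinct `x, y, z` the Vandermonde minors are nonzero, so the system is
consistent exactly when the bordered `3 × 3` determinant vanishes, and then Cramer's rule gives
`a` and `b`. The theorem is the case `x = m^2`, `y = n^2`, `z = r^2`.
-/

def IsQuadCycle {K : Type*} [CommRing K] (a b x y z : K) : Prop :=
  x^2 + a*x + b = y ∧ y^2 + a*y + b = z ∧ z^2 + a*z + b = x

section

variable {K : Type*} {a b x y z : K}

theorem IsQuadCycle.condition [CommRing K] (h : IsQuadCycle a b x y z) :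
    x^2*(1 - y + z) + x*(-y + y^2 - z*(1 + z)) + z^2 - y^2*(z - 1) + y*z*(z - 1) = 0 := by
  obtain ⟨e1, e2, e3⟩ := h
  linear_combination (z - y)*e1 + (x - z)*e2 + (y - x)*e3

variable [Field K]

theorem IsQuadCycle.coeffs (hxy : x ≠ y) (hxz : x ≠ z) (hyz : y ≠ z)
    (h : IsQuadCycle a b x y z) :
    a = (-x^3 + x*y^2 - y^3 + x^2*z + y*z^2 - z^3) / ((x - y)*(x - z)*(y - z)) ∧
    b = (x^3*y - x^2*y^2 + y^3*z - x^2*z^2 - y^2*z^2 + x*z^3) / ((x - y)*(x - z)*(y - z)) := by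
  obtain ⟨e1, e2, e3⟩ := h
  have hD : (x - y)*(x - z)*(y - z) ≠ 0 := by
    simp only [ne_eq, mul_eq_zero, sub_eq_zero, not_or]
    exact ⟨⟨hxy, hxz⟩, hyz⟩
  rw [eq_div_iff hD, eq_div_iff hD]
  constructor
  · linear_combination (z^2 - y^2)*e1 + (x^2 - z^2)*e2 + (y^2 - x^2)*e3
  · linear_combination y*z*(y - z)*e1 + z*x*(z - x)*e2 + x*y*(x - y)*e3

theorem isQuadCycle_of_condition (hxy : x ≠ y) (hxz : x ≠ z) (hyz : y ≠ z)
    (hc : x^2*(1 - y + z) + x*(-y + y^2 - z*(1 + z)) + z^2 - y^2*(z - 1) + y*z*(z - 1) = 0) :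
    IsQuadCycle
      ((-x^3 + x*y^2 - y^3 + x^2*z + y*z^2 - z^3) / ((x - y)*(x - z)*(y - z)))
      ((x^3*y - x^2*y^2 + y^3*z - x^2*z^2 - y^2*z^2 + x*z^3) / ((x - y)*(x - z)*(y - z)))
      x y z := by
  have hxy' := sub_ne_zero.mpr hxy
  have hxz' := sub_ne_zero.mpr hxz
  have hyz' := sub_ne_zero.mpr hyz
  refine ⟨?_, ?_, ?_⟩
  · field_simp
    linear_combination (-x^2) * hc
  · field_simp
    linear_combination (-y^2) * hc
  · field_simp
    linear_combination (-z^2) * hc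

theorem exists_isQuadCycle_iff (hxy : x ≠ y) (hxz : x ≠ z) (hyz : y ≠ z) :
    (∃ a b : K, IsQuadCycle a b x y z) ↔
      x^2*(1 - y + z) + x*(-y + y^2 - z*(1 + z)) + z^2 - y^2*(z - 1) + y*z*(z - 1) = 0 :=
  ⟨fun ⟨_, _, h⟩ ↦ h.condition, fun hc ↦ ⟨_, _, isQuadCycle_of_condition hxy hxz hyz hc⟩⟩

end

theorem three_cycle_of_squares_classification (m n r : ℚ)
    (h1 : m^2 ≠ n^2) (h2 : n^2 ≠ r^2) (h3 : m^2 ≠ r^2) :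
    ((∃ a b : ℚ, (m^2)^2 + a*(m^2) + b = n^2 ∧ (n^2)^2 + a*(n^2) + b = r^2 ∧
        (r^2)^2 + a*(r^2) + b = m^2) ↔
      m^4*(1 - n^2 + r^2) + m^2*(-n^2 + n^4 - r^2*(1 + r^2)) + r^4 -
        n^4*(r^2 - 1) + n^2*r^2*(r^2 - 1) = 0) ∧
    (∀ a b : ℚ, (m^2)^2 + a*(m^2) + b = n^2 → (n^2)^2 + a*(n^2) + b = r^2 →
      (r^2)^2 + a*(r^2) + b = m^2 →
      a = (-m^6 + m^2*n^4 - n^6 + m^4*r^2 + n^2*r^4 - r^6) /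
        ((m^2 - n^2)*(m^2 - r^2)*(n^2 - r^2)) ∧
      b = (m^6*n^2 - m^4*n^4 + n^6*r^2 - m^4*r^4 - n^4*r^4 + m^2*r^6) /
        ((-m^2 + n^2)*(n^2 - r^2)*(-m^2 + r^2))) := by
  refine ⟨(exists_isQuadCycle_iff h1 h3 h2).trans ⟨fun h ↦ ?_, fun h ↦ ?_⟩,
    fun a b e1 e2 e3 ↦ ?_⟩
  · linear_combination h
  · linear_combination h
  · obtain ⟨ha, hb⟩ := IsQuadCycle.coeffs h1 h3 h2 ⟨e1, e2, e3⟩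
    constructor
    · convert ha using 2; ring
    · convert hb using 2 <;> ring
end
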